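/- arXiv:2009.00736 — 3 statements merged into one kernel-verified Lean document; each statement's English description precedes it below -/
import Mathlib

section
/- Let ū take values in [a,b] a.e., let v ∈ L²(Ω) satisfy the sign conditions v ≥ 0 a.e. on {ū = a} and v ≤ 0 a.e. on {ū = b}. For k ∈ ℕ define v_k(x) = 0 if a < ū(x) < a + 1/k or b − 1/k < ū(x) < b, and v_k(x) = min{k, max{v(x), −k}} otherwise. Then: (i) v_k satisfies the same sign conditions; (ii) |v_k(x)| ≤ |v(x)| a.e.; (iii) v_k → v in L²(Ω) as k → ∞; and (iv) for every 0 < ρ ≤ k⁻², the function ū + ρ v_k takes values in [a,b] a.e. -/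
/-!
For fixed `x` the layers `a < ū < a + 1/k` and `b - 1/k < ū < b` eventually miss `ū x` and the
truncation level `k` eventually exceeds `|v x|`, so `v_k x = v x` for large `k`; together with
`|v_k| ≤ |v|` dominated convergence gives `v_k → v` in `L²`. For admissibility,
`|ρ v_k| ≤ k⁻² k = 1/k`: outside the layers a point with `a < ū x < b` is at distance at least
`1/k` from both ends, and at the contact points `ū x = a`, `ū x = b` truncation keeps the sign of `v`.
-/

open MeasureTheory Filter Topology ENNReal

/-- The value of `v_k` at a point where `ū = s` and `v = t`. -/
noncomputable def truncatedDirection (a b : ℝ) (k : ℕ) (s t : ℝ) : ℝ :=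
  if (a < s ∧ s < a + 1 / (k : ℝ)) ∨ (b - 1 / (k : ℝ) < s ∧ s < b) then 0
  else min (k : ℝ) (max t (-(k : ℝ)))

section truncatedDirection

variable {a b s t : ℝ} {k : ℕ}

theorem truncatedDirection_nonneg (ht : 0 ≤ t) : 0 ≤ truncatedDirection a b k s t := by
  unfold truncatedDirection
  split_ifs
  exacts [le_rfl, le_min k.cast_nonneg (le_max_of_le_left ht)]

theorem truncatedDirection_nonpos (ht : t ≤ 0) : truncatedDirection a b k s t ≤ 0 := by
  unfold truncatedDirection
  split_ifs
  exacts [le_rfl, min_le_of_right_le (max_le ht (neg_nonpos.2 k.cast_nonneg))]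

theorem abs_truncatedDirection_le_abs : |truncatedDirection a b k s t| ≤ |t| := by
  unfold truncatedDirection
  split_ifs
  · simp
  · rw [abs_le]
    constructor
    · exact le_min (by linarith [abs_nonneg t]) ((neg_abs_le t).trans (le_max_left _ _))
    · exact (min_le_right _ _).trans (max_le (le_abs_self t) (by linarith [abs_nonneg t]))

theorem abs_truncatedDirection_le_natCast : |truncatedDirection a b k s t| ≤ k := by
  unfold truncatedDirection
  split_ifs
  · simp
  · exact abs_le.2 ⟨le_min (by linarith [k.cast_nonneg (α := ℝ)]) (le_max_right _ _),
      min_le_left _ _⟩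

theorem eventually_truncatedDirection_eq (a b s t : ℝ) :
    ∀ᶠ k : ℕ in atTop, truncatedDirection a b k s t = t := by
  have h_inv : Tendsto (fun k : ℕ => 1 / (k : ℝ)) atTop (𝓝 0) :=
    tendsto_one_div_atTop_nhds_zero_nat
  have h_left : ∀ᶠ k : ℕ in atTop, ¬(a < s ∧ s < a + 1 / (k : ℝ)) := by
    rcases le_or_gt s a with h | h
    · exact .of_forall fun k hk => hk.1.not_ge h
    · filter_upwards [h_inv.eventually_lt_const (sub_pos.2 h)] with k hk hc
      linarith [hc.2]
  have h_right : ∀ᶠ k : ℕ in atTop, ¬(b - 1 / (k : ℝ) < s ∧ s < b) := by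
    rcases le_or_gt b s with h | h
    · exact .of_forall fun k hk => hk.2.not_ge h
    · filter_upwards [h_inv.eventually_lt_const (sub_pos.2 h)] with k hk hc
      linarith [hc.1]
  filter_upwards [h_left, h_right, tendsto_natCast_atTop_atTop.eventually_ge_atTop |t|]
    with k hk_left hk_right hk_large
  rw [truncatedDirection, if_neg (not_or.2 ⟨hk_left, hk_right⟩),
    max_eq_left (neg_le.1 ((neg_le_abs t).trans hk_large)),
    min_eq_right ((le_abs_self t).trans hk_large)]

theorem add_mul_truncatedDirection_mem_Icc (hs : s ∈ Set.Icc a b) (ha : s = a → 0 ≤ t)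
    (hb : s = b → t ≤ 0) (hk : 1 ≤ (b - a) * k) {ρ : ℝ} (hρ : 0 < ρ) (hρk : ρ ≤ ((k : ℝ) ^ 2)⁻¹) :
    s + ρ * truncatedDirection a b k s t ∈ Set.Icc a b := by
  have hk_pos : (0 : ℝ) < k := Nat.cast_pos.2 (Nat.pos_of_ne_zero fun h => by norm_num [h] at hk)
  have h_step : |ρ * truncatedDirection a b k s t| ≤ 1 / k := by
    rw [abs_mul, abs_of_pos hρ]
    calc ρ * |truncatedDirection a b k s t| ≤ ((k : ℝ) ^ 2)⁻¹ * k :=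
          mul_le_mul hρk abs_truncatedDirection_le_natCast (abs_nonneg _) (by positivity)
      _ = 1 / k := by field_simp
  have h_width : 1 / (k : ℝ) ≤ b - a := by rw [div_le_iff₀ hk_pos]; linarith
  rcases abs_le.1 h_step with ⟨h_lo, h_hi⟩
  rcases hs.1.eq_or_lt with has | has
  · have : 0 ≤ ρ * truncatedDirection a b k s t :=
      mul_nonneg hρ.le (truncatedDirection_nonneg (ha has.symm))
    constructor <;> linarith
  rcases hs.2.eq_or_lt with hsb | hsb
  · have : ρ * truncatedDirection a b k s t ≤ 0 :=
      mul_nonpos_of_nonneg_of_nonpos hρ.le (truncatedDirection_nonpos (hb hsb))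
    constructor <;> linarith
  by_cases hthin : (a < s ∧ s < a + 1 / (k : ℝ)) ∨ (b - 1 / (k : ℝ) < s ∧ s < b)
  · rw [truncatedDirection, if_pos hthin, mul_zero, add_zero]
    exact hs
  · push Not at hthin
    have h_above := hthin.1 has
    have h_below : s ≤ b - 1 / k := not_lt.1 fun h => (hthin.2 h).not_gt hsb
    constructor <;> linarith

end truncatedDirection

theorem measurable_truncatedDirection (a b : ℝ) (k : ℕ) :
    Measurable (Function.uncurry (truncatedDirection a b k)) :=
  Measurable.ite (measurable_fst (measurableSet_Ioo.union measurableSet_Ioo)) measurable_const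
    (measurable_const.min (measurable_snd.max measurable_const))

theorem tendsto_eLpNorm_sub_of_dominated {α E : Type*} [MeasurableSpace α] {μ : Measure α}
    [NormedAddCommGroup E] {p : ℝ≥0∞} (hp0 : p ≠ 0) (hp : p ≠ ∞)
    {f : ℕ → α → E} {g : α → E} {G : α → ℝ}
    (hf : ∀ n, AEStronglyMeasurable (f n) μ) (hg : MemLp g p μ) (hG : MemLp G p μ)
    (hbound : ∀ n, ∀ᵐ x ∂μ, ‖f n x‖ ≤ G x)
    (hlim : ∀ᵐ x ∂μ, Tendsto (fun n => f n x) atTop (𝓝 (g x))) :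
    Tendsto (fun n => eLpNorm (fun x => f n x - g x) p μ) atTop (𝓝 0) := by
  have hp_pos : 0 < p.toReal := toReal_pos hp0 hp
  set H : α → ℝ := fun x => G x + ‖g x‖
  have hH : MemLp H p μ := hG.add hg.norm
  have hlintegral : Tendsto (fun n => ∫⁻ x, ‖f n x - g x‖ₑ ^ p.toReal ∂μ) atTop (𝓝 0) := by
    rw [← lintegral_zero (μ := μ)]
    refine tendsto_lintegral_of_dominated_convergence' (fun x => ‖H x‖ₑ ^ p.toReal)
      (fun n => ((hf n).sub hg.1).enorm.pow_const _) (fun n => ?_)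
      (lintegral_rpow_enorm_lt_top_of_eLpNorm_lt_top hp0 hp hH.2).ne ?_
    · filter_upwards [hbound n] with x hx
      refine rpow_le_rpow (enorm_le_iff_norm_le.2 ?_) hp_pos.le
      calc ‖f n x - g x‖ ≤ ‖f n x‖ + ‖g x‖ := norm_sub_le _ _
        _ ≤ H x := add_le_add_left hx _
        _ ≤ ‖H x‖ := Real.le_norm_self _
    · filter_upwards [hlim] with x hx
      have h := ((continuous_rpow_const (y := p.toReal)).tendsto _).comp
        (tendsto_sub_nhds_zero_iff.2 hx).enorm
      rwa [enorm_zero, zero_rpow_of_pos hp_pos] at h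
  have hroot := ((continuous_rpow_const (y := 1 / p.toReal)).tendsto 0).comp hlintegral
  rw [zero_rpow_of_pos (by positivity)] at hroot
  refine hroot.congr fun n => ?_
  simp [eLpNorm_eq_lintegral_rpow_enorm_toReal hp0 hp]

theorem truncated_directions_properties_general
    (d : ℕ)
    (a b : ℝ)
    (μ : Measure (EuclideanSpace ℝ (Fin d)))
    (ubar v : EuclideanSpace ℝ (Fin d) → ℝ)
    (hubar_meas : Measurable ubar)
    (hubar_mem : ∀ᵐ x ∂μ, ubar x ∈ Set.Icc a b)
    (hv : MemLp v 2 μ)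
    (hv_a : ∀ᵐ x ∂μ, ubar x = a → 0 ≤ v x)
    (hv_b : ∀ᵐ x ∂μ, ubar x = b → v x ≤ 0)
    (vk : ℕ → EuclideanSpace ℝ (Fin d) → ℝ)
    (hvk : ∀ k x, vk k x =
      if (a < ubar x ∧ ubar x < a + 1 / (k : ℝ)) ∨
         (b - 1 / (k : ℝ) < ubar x ∧ ubar x < b)
      then 0 else min (k : ℝ) (max (v x) (-(k : ℝ)))) :
    (∀ k, (∀ᵐ x ∂μ, ubar x = a → 0 ≤ vk k x) ∧ (∀ᵐ x ∂μ, ubar x = b → vk k x ≤ 0)) ∧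
    (∀ k, ∀ᵐ x ∂μ, |vk k x| ≤ |v x|) ∧
    Tendsto (fun k => eLpNorm (fun x => vk k x - v x) 2 μ) atTop (𝓝 0) ∧
    (∀ k : ℕ, 1 ≤ (b - a) * (k : ℝ) → ∀ ρ : ℝ, 0 < ρ → ρ ≤ ((k : ℝ) ^ 2)⁻¹ →
      ∀ᵐ x ∂μ, ubar x + ρ * vk k x ∈ Set.Icc a b) := by
  obtain rfl : vk = fun k x => truncatedDirection a b k (ubar x) (v x) :=
    funext fun k => funext (hvk k)
  refine ⟨fun k => ⟨?_, ?_⟩, fun k => .of_forall fun x => abs_truncatedDirection_le_abs, ?_, ?_⟩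
  · filter_upwards [hv_a] with x hx hxa using truncatedDirection_nonneg (hx hxa)
  · filter_upwards [hv_b] with x hx hxb using truncatedDirection_nonpos (hx hxb)
  · refine tendsto_eLpNorm_sub_of_dominated two_ne_zero ofNat_ne_top (fun k => ?_) hv hv.norm
      (fun k => .of_forall fun x => abs_truncatedDirection_le_abs)
      (.of_forall fun x => tendsto_nhds_of_eventually_eq (eventually_truncatedDirection_eq ..))
    exact ((measurable_truncatedDirection a b k).comp_aemeasurable
      (hubar_meas.aemeasurable.prodMk hv.1.aemeasurable)).aestronglyMeasurable
  · intro k hk ρ hρ hρk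
    filter_upwards [hubar_mem, hv_a, hv_b] with x hx ha hb
    exact add_mul_truncatedDirection_mem_Icc hx ha hb hk hρ hρk

/-- Properties of the truncated critical directions v_k built from
a critical direction v: sign conditions, pointwise domination, L² convergence
to v, and admissibility of ū + ρ v_k for 0 < ρ ≤ k⁻² (k large enough so that
1/k ≤ b − a). -/
theorem truncated_directions_properties
    (d : ℕ) (Ω : Set (EuclideanSpace ℝ (Fin d)))
    (hΩopen : IsOpen Ω) (hΩbdd : Bornology.IsBounded Ω)
    (hfin : volume Ω < ⊤)
    (a b : ℝ) (hab : a < b)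
    (μ : Measure (EuclideanSpace ℝ (Fin d))) (hμ : μ = volume.restrict Ω)
    (ubar v : EuclideanSpace ℝ (Fin d) → ℝ)
    (hubar_meas : Measurable ubar)
    (hubar_mem : ∀ᵐ x ∂μ, ubar x ∈ Set.Icc a b)
    (hv : MemLp v 2 μ)
    (hv_a : ∀ᵐ x ∂μ, ubar x = a → 0 ≤ v x)
    (hv_b : ∀ᵐ x ∂μ, ubar x = b → v x ≤ 0)
    (vk : ℕ → EuclideanSpace ℝ (Fin d) → ℝ)
    (hvk : ∀ k x, vk k x =
      if (a < ubar x ∧ ubar x < a + 1 / (k : ℝ)) ∨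
         (b - 1 / (k : ℝ) < ubar x ∧ ubar x < b)
      then 0 else min (k : ℝ) (max (v x) (-(k : ℝ)))) :
    (∀ k, (∀ᵐ x ∂μ, ubar x = a → 0 ≤ vk k x) ∧ (∀ᵐ x ∂μ, ubar x = b → vk k x ≤ 0)) ∧
    (∀ k, ∀ᵐ x ∂μ, |vk k x| ≤ |v x|) ∧
    Tendsto (fun k => eLpNorm (fun x => vk k x - v x) 2 μ) atTop (𝓝 0) ∧
    (∀ k : ℕ, 1 ≤ (b - a) * (k : ℝ) → ∀ ρ : ℝ, 0 < ρ → ρ ≤ ((k : ℝ) ^ 2)⁻¹ →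
      ∀ᵐ x ∂μ, ubar x + ρ * vk k x ∈ Set.Icc a b) :=
  truncated_directions_properties_general d a b μ ubar v hubar_meas hubar_mem hv hv_a hv_b vk hvk
end

section
/- Let H be a real Hilbert space, α, μ > 0, and let j : H → ℝ be C² such that j''(u)(v,v) = α‖v‖² + Q(u)(v,v) where Q(u)(v_k,v_k) → 0 whenever v_k ⇀ 0 weakly in H, and Q is jointly continuous in the sense that u_k → u strongly and v_k ⇀ v weakly imply Q(u_k)(v_k,v_k) → Q(u)(v,v). Suppose u_k → ū strongly in H, v_k ⇀ v weakly in H with ‖v_k‖ = 1 for all k, and limsup_k j''(u_k)(v_k,v_k) ≤ 0. Then v ≠ 0 is impossible together with j''(ū)(v,v) > 0; moreover if v = 0 then lim_k j''(u_k)(v_k,v_k) ≥ α > 0, a contradiction. In particular no such sequences exist. -/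
/-!
Along the sequences, `j''(u_k)(v_k, v_k) = α + Q(u_k)(v_k, v_k)` converges to `α + Q(ū)(v)`,
so this number equals the limsup and is `≤ 0`. But it is positive: for `v = 0` it is `α`, since
`Q(ū)(0) = 0`, and otherwise it dominates `j''(ū)(v, v) = α‖v‖² + Q(ū)(v)` because a weak limit
of unit vectors has norm at most `1`.
-/

open Filter Topology

theorem norm_le_of_tendsto_inner_self {H ι : Type*} [NormedAddCommGroup H]
    [InnerProductSpace ℝ H] {l : Filter ι} [l.NeBot] {vs : ι → H} {v : H} {C : ℝ}
    (hv : Tendsto (fun k => inner ℝ (vs k) v) l (𝓝 (inner ℝ v v)))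
    (hC : ∀ᶠ k in l, ‖vs k‖ ≤ C) :
    ‖v‖ ≤ C := by
  have hsq : ‖v‖ ^ 2 ≤ C * ‖v‖ := by
    rw [← real_inner_self_eq_norm_sq]
    refine le_of_tendsto hv (hC.mono fun k hk => ?_)
    exact (real_inner_le_norm _ _).trans (mul_le_mul_of_nonneg_right hk (norm_nonneg v))
  rcases (norm_nonneg v).eq_or_lt with h0 | hv0
  · obtain ⟨k, hk⟩ := hC.exists
    exact h0 ▸ (norm_nonneg _).trans hk
  · nlinarith

theorem no_degenerate_sequences_general
    {H : Type*} [NormedAddCommGroup H] [InnerProductSpace ℝ H]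
    (α : ℝ) (hα : 0 < α)
    (J2 : H → H → ℝ)
    (Q : H → H → ℝ)
    (hstruct : ∀ u v, J2 u v = α * ‖v‖ ^ 2 + Q u v)
    (hQnull : ∀ (u : H) (vs : ℕ → H),
      (∀ w : H, Tendsto (fun k => (inner ℝ (vs k) w : ℝ)) atTop (𝓝 (0 : ℝ))) →
      Tendsto (fun k => Q u (vs k)) atTop (𝓝 (0 : ℝ)))
    (hQjoint : ∀ (us : ℕ → H) (u : H) (vs : ℕ → H) (v : H),
      Tendsto us atTop (𝓝 u) →
      (∀ w : H, Tendsto (fun k => (inner ℝ (vs k) w : ℝ)) atTop (𝓝 (inner ℝ v w : ℝ))) →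
      Tendsto (fun k => Q (us k) (vs k)) atTop (𝓝 (Q u v)))
    (us : ℕ → H) (ubar : H) (vs : ℕ → H) (v : H)
    (hus : Tendsto us atTop (𝓝 ubar))
    (hvs : ∀ w : H, Tendsto (fun k => (inner ℝ (vs k) w : ℝ)) atTop (𝓝 (inner ℝ v w : ℝ)))
    (hnorm : ∀ k, ‖vs k‖ = 1)
    (hpos : v ≠ 0 → 0 < J2 ubar v)
    (hlimsup : limsup (fun k => J2 (us k) (vs k)) atTop ≤ 0) :
    False := by
  have hQ0 : Q ubar 0 = 0 :=
    tendsto_nhds_unique tendsto_const_nhds (hQnull ubar (fun _ => 0) fun w => by simp)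
  have hlim : Tendsto (fun k => J2 (us k) (vs k)) atTop (𝓝 (α + Q ubar v)) := by
    simp only [hstruct, hnorm, one_pow, mul_one]
    exact tendsto_const_nhds.add (hQjoint us ubar vs v hus hvs)
  have hv_le : ‖v‖ ≤ 1 :=
    norm_le_of_tendsto_inner_self (hvs v) (Eventually.of_forall fun k => (hnorm k).le)
  have hlim_pos : 0 < α + Q ubar v := by
    rcases eq_or_ne v 0 with rfl | hv
    · simpa [hQ0] using hα
    · have hJ := hpos hv
      rw [hstruct] at hJ
      nlinarith [mul_le_mul_of_nonneg_left (pow_le_one₀ (n := 2) (norm_nonneg v) hv_le) hα.le]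
  exact (hlim.limsup_eq ▸ hlimsup).not_gt hlim_pos

/-- Abstract contradiction core of the second-order sufficiency
proof: with j''(u)(v,v) = α‖v‖² + Q(u)(v,v), Q vanishing along weakly null
sequences and jointly sequentially continuous, there exist no sequences
u_k → ū strongly, v_k ⇀ v weakly with ‖v_k‖ = 1 and
limsup_k j''(u_k)(v_k,v_k) ≤ 0. -/
theorem no_degenerate_sequences
    {H : Type*} [NormedAddCommGroup H] [InnerProductSpace ℝ H] [CompleteSpace H]
    (α : ℝ) (hα : 0 < α)
    (j : H → ℝ) (hj : ContDiff ℝ 2 j)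
    (J2 : H → H → ℝ) (hJ2 : ∀ u v, J2 u v = (fderiv ℝ (fderiv ℝ j) u v) v)
    (Q : H → H → ℝ)
    (hstruct : ∀ u v, J2 u v = α * ‖v‖ ^ 2 + Q u v)
    (hQnull : ∀ (u : H) (vs : ℕ → H),
      (∀ w : H, Tendsto (fun k => (inner ℝ (vs k) w : ℝ)) atTop (𝓝 (0 : ℝ))) →
      Tendsto (fun k => Q u (vs k)) atTop (𝓝 (0 : ℝ)))
    (hQjoint : ∀ (us : ℕ → H) (u : H) (vs : ℕ → H) (v : H),
      Tendsto us atTop (𝓝 u) →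
      (∀ w : H, Tendsto (fun k => (inner ℝ (vs k) w : ℝ)) atTop (𝓝 (inner ℝ v w : ℝ))) →
      Tendsto (fun k => Q (us k) (vs k)) atTop (𝓝 (Q u v)))
    (us : ℕ → H) (ubar : H) (vs : ℕ → H) (v : H)
    (hus : Tendsto us atTop (𝓝 ubar))
    (hvs : ∀ w : H, Tendsto (fun k => (inner ℝ (vs k) w : ℝ)) atTop (𝓝 (inner ℝ v w : ℝ)))
    (hnorm : ∀ k, ‖vs k‖ = 1)
    (hpos : v ≠ 0 → 0 < J2 ubar v)
    (hlimsup : limsup (fun k => J2 (us k) (vs k)) atTop ≤ 0) :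
    False :=
  no_degenerate_sequences_general α hα J2 Q hstruct hQnull hQjoint us ubar vs v hus hvs hnorm hpos
    hlimsup
end

section
/- Let Ω ⊂ ℝ^d be open and bounded with finite measure, 𝔭̄ ∈ L²(Ω), and suppose the sign conditions 𝔭̄ ≥ 0 a.e. on {ū = a}, 𝔭̄ ≤ 0 a.e. on {ū = b}, 𝔭̄ = 0 elsewhere hold. Let τ_k ↓ 0, and let v_k ∈ C^{τ_k} (i.e., v_k satisfies the sign condition and v_k = 0 a.e. where |𝔭̄| > τ_k) with ‖v_k‖_{L²(Ω)} = 1 and v_k ⇀ v weakly in L²(Ω). Then ∫_Ω 𝔭̄ v dx = 0 and v(x) = 0 for a.e. x with 𝔭̄(x) ≠ 0; that is, v belongs to the critical cone C^0. -/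
/-!
The sign conditions define a weakly closed cone (tested against indicators of measurable sets,
after replacing the possibly non-measurable level sets of `ubar` by measurable hulls), so `v`
inherits them; together with the sign conditions on `𝔭̄` this gives `𝔭̄ v ≥ 0` a.e. Since `v_k`
vanishes where `|𝔭̄| > τ_k`, `|∫ 𝔭̄ v_k| ≤ τ_k ‖v_k‖₁ ≤ τ_k √|Ω| → 0`, so `∫ 𝔭̄ v = 0` by weak
convergence, and a nonnegative function with zero integral vanishes a.e.
-/

open MeasureTheory Filter Topology
open scoped ENNReal

namespace MeasureTheory

variable {α : Type*} [MeasurableSpace α] {μ : Measure α}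

theorem ae_restrict_toMeasurable_of_ae_imp [SFinite μ] {P : α → Prop} {f : α → ℝ}
    (hf : AEStronglyMeasurable f μ) (h : ∀ᵐ x ∂μ, P x → 0 ≤ f x) :
    ∀ᵐ x ∂μ.restrict (toMeasurable μ {x | P x}), 0 ≤ f x := by
  obtain ⟨g, hg_meas, hfg⟩ := hf
  have hneg : MeasurableSet {x | g x < 0} := hg_meas.measurable measurableSet_Iio
  have hnull : μ ({x | P x} ∩ {x | g x < 0}) = 0 := by
    refine measure_mono_null ?_ (measure_union_null (ae_iff.mp h) (ae_iff.mp hfg))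
    rintro x ⟨hPx, hgx⟩
    by_cases hx : f x = g x
    · exact Or.inl fun hfx => (hfx hPx).not_gt (hx ▸ hgx)
    · exact Or.inr hx
  rw [← Measure.measure_toMeasurable_inter_of_sFinite hneg] at hnull
  have hg : ∀ᵐ x ∂μ.restrict (toMeasurable μ {x | P x}), 0 ≤ g x := by
    rw [ae_restrict_iff' (measurableSet_toMeasurable _ _), ae_iff]
    simp only [Classical.not_imp, not_le]
    exact hnull
  filter_upwards [hg, ae_restrict_of_ae hfg] with x hgx hx
  rwa [hx]

theorem ae_nonneg_of_tendsto_setIntegral {vs : ℕ → α → ℝ} {v : α → ℝ} (hv : Integrable v μ)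
    (hvs : ∀ k, 0 ≤ᵐ[μ] vs k)
    (hlim : ∀ s, MeasurableSet s →
      Tendsto (fun k => ∫ x in s, vs k x ∂μ) atTop (𝓝 (∫ x in s, v x ∂μ))) :
    0 ≤ᵐ[μ] v :=
  ae_nonneg_of_forall_setIntegral_nonneg hv fun s hs _ =>
    ge_of_tendsto' (hlim s hs) fun k =>
      setIntegral_nonneg_of_ae_restrict (ae_restrict_of_ae (hvs k))

theorem ae_imp_nonneg_of_weak_tendsto [IsFiniteMeasure μ] {P : α → Prop}
    {vs : ℕ → α → ℝ} {v : α → ℝ} (hvs_mem : ∀ k, MemLp (vs k) 2 μ) (hv_mem : MemLp v 2 μ)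
    (hvs : ∀ k, ∀ᵐ x ∂μ, P x → 0 ≤ vs k x)
    (hweak : ∀ w : α → ℝ, MemLp w 2 μ →
      Tendsto (fun k => ∫ x, vs k x * w x ∂μ) atTop (𝓝 (∫ x, v x * w x ∂μ))) :
    ∀ᵐ x ∂μ, P x → 0 ≤ v x := by
  set T := toMeasurable μ {x | P x}
  have hT : MeasurableSet T := measurableSet_toMeasurable μ _
  have setIntegral_eq_integral_mul_indicator : ∀ (f : α → ℝ) s, MeasurableSet s →
      ∫ x in s, f x ∂μ.restrict T = ∫ x, f x * (s ∩ T).indicator (fun _ => 1) x ∂μ := by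
    intro f s hs
    rw [Measure.restrict_restrict hs, ← integral_indicator (hs.inter hT)]
    congr with x
    by_cases hx : x ∈ s ∩ T <;> simp [hx]
  have hv : 0 ≤ᵐ[μ.restrict T] v :=
    ae_nonneg_of_tendsto_setIntegral (hv_mem.integrable one_le_two).restrict
      (fun k => ae_restrict_toMeasurable_of_ae_imp (hvs_mem k).1 (hvs k))
      fun s hs => by
        simpa only [setIntegral_eq_integral_mul_indicator _ s hs] using
          hweak _ (memLp_indicator_const 2 (hs.inter hT) 1 (Or.inr (measure_ne_top μ _)))
  exact (ae_imp_of_ae_restrict hv).mono fun x hx hPx => hx (subset_toMeasurable μ _ hPx)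

theorem abs_integral_mul_le_of_ae_eq_zero {f g : α → ℝ} {t : ℝ} (hf : Integrable f μ)
    (hfg : Integrable (fun x => f x * g x) μ) (h : ∀ᵐ x ∂μ, t < |g x| → f x = 0) :
    |∫ x, f x * g x ∂μ| ≤ t * ∫ x, |f x| ∂μ := by
  calc |∫ x, f x * g x ∂μ| ≤ ∫ x, |f x * g x| ∂μ := abs_integral_le_integral_abs
    _ ≤ ∫ x, t * |f x| ∂μ := by
        refine integral_mono_ae hfg.abs (hf.abs.const_mul t) ?_
        filter_upwards [h] with x hx
        rcases le_or_gt |g x| t with hgx | hgx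
        · rw [abs_mul, mul_comm t]
          exact mul_le_mul_of_nonneg_left hgx (abs_nonneg _)
        · simp [hx hgx]
    _ = t * ∫ x, |f x| ∂μ := integral_const_mul t _

theorem integral_abs_le_eLpNorm_two_mul [IsFiniteMeasure μ] {f : α → ℝ} (hf : MemLp f 2 μ) :
    ∫ x, |f x| ∂μ ≤ (eLpNorm f 2 μ * μ Set.univ ^ (1 / 2 : ℝ)).toReal := by
  have hHolder : eLpNorm f 1 μ ≤ eLpNorm f 2 μ * μ Set.univ ^ (1 / 2 : ℝ) := by
    convert eLpNorm_le_eLpNorm_mul_rpow_measure_univ one_le_two hf.1 using 3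
    norm_num
  have hL1 : ∫ x, |f x| ∂μ = (eLpNorm f 1 μ).toReal := by
    rw [eLpNorm_one_eq_lintegral_enorm, ← integral_norm_eq_lintegral_enorm hf.1]
    rfl
  rw [hL1]
  exact ENNReal.toReal_mono (by finiteness) hHolder

theorem tendsto_integral_mul_nhds_zero_of_ae_eq_zero [IsFiniteMeasure μ] {g : α → ℝ}
    {τ : ℕ → ℝ} {vs : ℕ → α → ℝ} (hg : MemLp g 2 μ) (hτ : Tendsto τ atTop (𝓝 0))
    (hvs_mem : ∀ k, MemLp (vs k) 2 μ) (hnorm : ∀ k, eLpNorm (vs k) 2 μ ≤ 1)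
    (hvs_0 : ∀ k, ∀ᵐ x ∂μ, τ k < |g x| → vs k x = 0) :
    Tendsto (fun k => ∫ x, vs k x * g x ∂μ) atTop (𝓝 0) := by
  set C := (μ Set.univ ^ (1 / 2 : ℝ)).toReal
  have hL1 : ∀ k, ∫ x, |vs k x| ∂μ ≤ C := fun k =>
    (integral_abs_le_eLpNorm_two_mul (hvs_mem k)).trans
      (ENNReal.toReal_mono (by finiteness) (mul_le_of_le_one_left' (hnorm k)))
  have hbound : ∀ k, ‖∫ x, vs k x * g x ∂μ‖ ≤ |τ k| * C := fun k => calc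
    ‖∫ x, vs k x * g x ∂μ‖ ≤ τ k * ∫ x, |vs k x| ∂μ :=
        abs_integral_mul_le_of_ae_eq_zero ((hvs_mem k).integrable one_le_two)
          ((hvs_mem k).integrable_mul hg) (hvs_0 k)
    _ ≤ |τ k| * ∫ x, |vs k x| ∂μ :=
        mul_le_mul_of_nonneg_right (le_abs_self _) (integral_nonneg fun _ => abs_nonneg _)
    _ ≤ |τ k| * C := mul_le_mul_of_nonneg_left (hL1 k) (abs_nonneg _)
  exact squeeze_zero_norm hbound (by simpa using hτ.abs.mul_const C)

end MeasureTheory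

theorem mul_nonneg_of_box_sign_conditions {a b u p w : ℝ} (hu : u ∈ Set.Icc a b)
    (hpa : u = a → 0 ≤ p) (hpb : u = b → p ≤ 0) (hpi : a < u → u < b → p = 0)
    (hwa : u = a → 0 ≤ w) (hwb : u = b → w ≤ 0) : 0 ≤ p * w := by
  rcases hu.1.eq_or_lt with rfl | hau
  · exact mul_nonneg (hpa rfl) (hwa rfl)
  rcases hu.2.eq_or_lt with rfl | hub
  · exact mul_nonneg_of_nonpos_of_nonpos (hpb rfl) (hwb rfl)
  rw [hpi hau hub, zero_mul]

theorem weak_limit_in_critical_cone_general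
    (d : ℕ) (Ω : Set (EuclideanSpace ℝ (Fin d)))
    (hfin : volume Ω < ⊤)
    (a b : ℝ)
    (μ : Measure (EuclideanSpace ℝ (Fin d))) (hμ : μ = volume.restrict Ω)
    (ubar pfrak : EuclideanSpace ℝ (Fin d) → ℝ)
    (hpfrak : MemLp pfrak 2 μ)
    (hubar_mem : ∀ᵐ x ∂μ, ubar x ∈ Set.Icc a b)
    (hsign_a : ∀ᵐ x ∂μ, ubar x = a → 0 ≤ pfrak x)
    (hsign_b : ∀ᵐ x ∂μ, ubar x = b → pfrak x ≤ 0)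
    (hsign_i : ∀ᵐ x ∂μ, a < ubar x → ubar x < b → pfrak x = 0)
    (τ : ℕ → ℝ) (hτ : Tendsto τ atTop (𝓝 0))
    (vs : ℕ → EuclideanSpace ℝ (Fin d) → ℝ) (v : EuclideanSpace ℝ (Fin d) → ℝ)
    (hvs_mem : ∀ k, MemLp (vs k) 2 μ) (hv_mem : MemLp v 2 μ)
    (hvs_a : ∀ k, ∀ᵐ x ∂μ, ubar x = a → 0 ≤ vs k x)
    (hvs_b : ∀ k, ∀ᵐ x ∂μ, ubar x = b → vs k x ≤ 0)
    (hvs_0 : ∀ k, ∀ᵐ x ∂μ, τ k < |pfrak x| → vs k x = 0)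
    (hnorm : ∀ k, eLpNorm (vs k) 2 μ = 1)
    (hweak : ∀ w : EuclideanSpace ℝ (Fin d) → ℝ, MemLp w 2 μ →
      Tendsto (fun k => ∫ x, vs k x * w x ∂μ) atTop (𝓝 (∫ x, v x * w x ∂μ))) :
    (∫ x, pfrak x * v x ∂μ) = 0 ∧
    (∀ᵐ x ∂μ, pfrak x ≠ 0 → v x = 0) ∧
    (∀ᵐ x ∂μ, ubar x = a → 0 ≤ v x) ∧
    (∀ᵐ x ∂μ, ubar x = b → v x ≤ 0) := by
  have : IsFiniteMeasure μ := ⟨by rwa [hμ, Measure.restrict_apply_univ]⟩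
  have hva : ∀ᵐ x ∂μ, ubar x = a → 0 ≤ v x :=
    ae_imp_nonneg_of_weak_tendsto hvs_mem hv_mem hvs_a hweak
  have hvb : ∀ᵐ x ∂μ, ubar x = b → v x ≤ 0 := by
    have hneg := ae_imp_nonneg_of_weak_tendsto (fun k => (hvs_mem k).neg) hv_mem.neg
      (fun k => (hvs_b k).mono fun x hx hb => neg_nonneg.mpr (hx hb))
      fun w hw => by simpa only [Pi.neg_apply, neg_mul, integral_neg] using (hweak w hw).neg
    exact hneg.mono fun x hx hb => neg_nonneg.mp (hx hb)
  have hvp : ∫ x, pfrak x * v x ∂μ = 0 := by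
    simp_rw [mul_comm (pfrak _)]
    exact tendsto_nhds_unique (hweak pfrak hpfrak)
      (tendsto_integral_mul_nhds_zero_of_ae_eq_zero hpfrak hτ hvs_mem (fun k => (hnorm k).le)
        hvs_0)
  have hprod : 0 ≤ᵐ[μ] fun x => pfrak x * v x := by
    filter_upwards [hubar_mem, hsign_a, hsign_b, hsign_i, hva, hvb] with x hu hpa hpb hpi hwa hwb
    exact mul_nonneg_of_box_sign_conditions hu hpa hpb hpi hwa hwb
  have hzero := (integral_eq_zero_iff_of_nonneg_ae hprod (hpfrak.integrable_mul hv_mem)).mp hvp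
  refine ⟨hvp, ?_, hva, hvb⟩
  filter_upwards [hzero] with x hx hpx
  exact (mul_eq_zero.mp hx).resolve_left hpx

/-- If τ_k ↓ 0, v_k ∈ C^{τ_k} with ‖v_k‖_{L²} = 1 and v_k ⇀ v
weakly in L², then ∫ 𝔭̄ v = 0 and v vanishes a.e. where 𝔭̄ ≠ 0; that is, v
belongs to the critical cone C^0. -/
theorem weak_limit_in_critical_cone
    (d : ℕ) (Ω : Set (EuclideanSpace ℝ (Fin d)))
    (hΩopen : IsOpen Ω) (hΩbdd : Bornology.IsBounded Ω)
    (hfin : volume Ω < ⊤)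
    (a b : ℝ) (hab : a < b)
    (μ : Measure (EuclideanSpace ℝ (Fin d))) (hμ : μ = volume.restrict Ω)
    (ubar pfrak : EuclideanSpace ℝ (Fin d) → ℝ)
    (hpfrak : MemLp pfrak 2 μ)
    (hubar_mem : ∀ᵐ x ∂μ, ubar x ∈ Set.Icc a b)
    (hsign_a : ∀ᵐ x ∂μ, ubar x = a → 0 ≤ pfrak x)
    (hsign_b : ∀ᵐ x ∂μ, ubar x = b → pfrak x ≤ 0)
    (hsign_i : ∀ᵐ x ∂μ, a < ubar x → ubar x < b → pfrak x = 0)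
    (τ : ℕ → ℝ) (hτpos : ∀ k, 0 < τ k) (hτ : Tendsto τ atTop (𝓝 0))
    (vs : ℕ → EuclideanSpace ℝ (Fin d) → ℝ) (v : EuclideanSpace ℝ (Fin d) → ℝ)
    (hvs_mem : ∀ k, MemLp (vs k) 2 μ) (hv_mem : MemLp v 2 μ)
    (hvs_a : ∀ k, ∀ᵐ x ∂μ, ubar x = a → 0 ≤ vs k x)
    (hvs_b : ∀ k, ∀ᵐ x ∂μ, ubar x = b → vs k x ≤ 0)
    (hvs_0 : ∀ k, ∀ᵐ x ∂μ, τ k < |pfrak x| → vs k x = 0)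
    (hnorm : ∀ k, eLpNorm (vs k) 2 μ = 1)
    (hweak : ∀ w : EuclideanSpace ℝ (Fin d) → ℝ, MemLp w 2 μ →
      Tendsto (fun k => ∫ x, vs k x * w x ∂μ) atTop (𝓝 (∫ x, v x * w x ∂μ))) :
    (∫ x, pfrak x * v x ∂μ) = 0 ∧
    (∀ᵐ x ∂μ, pfrak x ≠ 0 → v x = 0) ∧
    (∀ᵐ x ∂μ, ubar x = a → 0 ≤ v x) ∧
    (∀ᵐ x ∂μ, ubar x = b → v x ≤ 0) :=
  weak_limit_in_critical_cone_general d Ω hfin a b μ hμ ubar pfrak hpfrak hubar_mem hsign_a hsign_b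
    hsign_i τ hτ vs v hvs_mem hv_mem hvs_a hvs_b hvs_0 hnorm hweak
end
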